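/- Entropy versus cross-entropy for biased Bernoulli vectors: let n ≥ 1, let δ_1,…,δ_n ∈ [0,1) and τ_1,…,τ_n ∈ [0,1], and let α > 0, β ∈ ℝ with 0 ≤ β ≤ α. Suppose Σ_{i=1}^n h((1+τ_i)/2) ≥ n − α (the random vector Z of independent Bernoulli((1+τ_i)/2) variables has entropy at least n − α) and Σ_{i=1}^n [ −((1+τ_i)/2)·log₂((1+δ_i)/2) − ((1−τ_i)/2)·log₂((1−δ_i)/2) ] ≤ n − β (the cross-entropy of Z relative to the vector X of independent Bernoulli((1+δ_i)/2) variables is at most n − β). Then Σ_{i=1}^n h((1+δ_i)/2) ≤ n − β²/(16α); that is, H(X) ≤ n − β²/(16α). -/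

import Mathlib

/-! The bound `h((1 + t) / 2) ≤ 1 - t² / (2 ln 2)` and the inequalities `ln (1 ± d) ≤ ± d`
(which give cross entropy `≥ 1 - d s / ln 2`) turn the two hypotheses into
`∑ τᵢ² ≤ 2 α ln 2` and `β ln 2 ≤ ∑ δᵢ τᵢ`. Cauchy–Schwarz then yields
`∑ δᵢ² ≥ β² ln 2 / (2 α)`, and the entropy bound applied to `δ` gives
`H(X) ≤ n - β² / (4 α)`. -/

/-- Binary entropy function. -/
noncomputable def binEnt (p : ℝ) : ℝ :=
  -(p * Real.logb 2 p) - (1 - p) * Real.logb 2 (1 - p)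

open Real Set Finset

lemma two_mul_le_log_one_add_sub_log_one_sub {x : ℝ} (hx₀ : 0 ≤ x) (hx₁ : x < 1) :
    2 * x ≤ log (1 + x) - log (1 - x) := by
  have h := sum_range_le_log_div hx₀ hx₁ 1
  rw [log_div (by linarith) (by linarith)] at h
  simp only [range_one, sum_singleton] at h
  linarith

lemma sq_le_mul_log_one_add_add_mul_log_one_sub {t : ℝ} (ht : |t| ≤ 1) :
    t ^ 2 ≤ (1 + t) * log (1 + t) + (1 - t) * log (1 - t) := by
  wlog ht₀ : 0 ≤ t generalizing t
  · have := this (t := -t) (by rwa [abs_neg]) (by linarith)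
    rw [neg_sq, ← sub_eq_add_neg, sub_neg_eq_add] at this
    linarith
  have ht₁ : t ≤ 1 := (abs_le.1 ht).2
  set F : ℝ → ℝ := fun y ↦ (1 + y) * log (1 + y) + (1 - y) * log (1 - y) - y ^ 2
  have hF : ∀ y ∈ Ioo (0 : ℝ) 1, HasDerivAt F (log (1 + y) - log (1 - y) - 2 * y) y := by
    intro y hy
    have h₁ := (hasDerivAt_mul_log (x := 1 + y) (by linarith [hy.1])).comp y
      ((hasDerivAt_id y).const_add 1)
    have h₂ := (hasDerivAt_mul_log (x := 1 - y) (by linarith [hy.2])).comp y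
      ((hasDerivAt_id y).const_sub 1)
    exact ((h₁.add h₂).sub (hasDerivAt_pow 2 y)).congr_deriv (by push_cast; ring)
  have hmono : MonotoneOn F (Icc 0 1) := by
    refine monotoneOn_of_hasDerivWithinAt_nonneg (convex_Icc 0 1)
      (f' := fun y ↦ log (1 + y) - log (1 - y) - 2 * y) ?_ ?_ ?_
    · exact (((continuous_mul_log.comp (continuous_const.add continuous_id)).add
        (continuous_mul_log.comp (continuous_const.sub continuous_id))).sub
        (continuous_pow 2)).continuousOn
    · rw [interior_Icc]
      exact fun y hy ↦ (hF y hy).hasDerivWithinAt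
    · rw [interior_Icc]
      exact fun y hy ↦ sub_nonneg.2 (two_mul_le_log_one_add_sub_log_one_sub hy.1.le hy.2)
  simpa [F] using hmono ⟨le_rfl, zero_le_one⟩ ⟨ht₀, ht₁⟩ ht₀

lemma mul_log_div_two (x : ℝ) : x * log (x / 2) = x * log x - x * log 2 := by
  rcases eq_or_ne x 0 with rfl | hx
  · simp
  rw [log_div hx two_ne_zero]
  ring

lemma binEnt_one_add_div_two (t : ℝ) :
    binEnt ((1 + t) / 2) =
      1 - ((1 + t) * log (1 + t) + (1 - t) * log (1 - t)) / (2 * log 2) := by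
  have hlog2 : log 2 ≠ 0 := by positivity
  have h₁ := mul_log_div_two (1 + t)
  have h₂ := mul_log_div_two (1 - t)
  rw [binEnt, show 1 - (1 + t) / 2 = (1 - t) / 2 by ring]
  simp only [logb]
  field_simp
  linear_combination -h₁ - h₂

lemma binEnt_one_add_div_two_le {t : ℝ} (ht : |t| ≤ 1) :
    binEnt ((1 + t) / 2) ≤ 1 - t ^ 2 / (2 * log 2) := by
  rw [binEnt_one_add_div_two]
  gcongr
  exact sq_le_mul_log_one_add_add_mul_log_one_sub ht

lemma one_sub_mul_div_log_two_le_crossEntropy {d s : ℝ} (hd : |d| < 1) (hs : |s| ≤ 1) :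
    1 - d * s / log 2 ≤
      -((1 + s) / 2 * logb 2 ((1 + d) / 2)) - (1 - s) / 2 * logb 2 ((1 - d) / 2) := by
  obtain ⟨hd₁, hd₂⟩ := abs_lt.1 hd
  obtain ⟨hs₁, hs₂⟩ := abs_le.1 hs
  have hlog_add : log (1 + d) ≤ d := by
    linarith [log_le_sub_one_of_pos (by linarith : 0 < 1 + d)]
  have hlog_sub : log (1 - d) ≤ -d := by
    linarith [log_le_sub_one_of_pos (by linarith : 0 < 1 - d)]
  have hsum : (1 + s) * log (1 + d) + (1 - s) * log (1 - d) ≤ 2 * (d * s) := by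
    nlinarith [mul_le_mul_of_nonneg_left hlog_add (by linarith : 0 ≤ 1 + s),
      mul_le_mul_of_nonneg_left hlog_sub (by linarith : 0 ≤ 1 - s)]
  have hlog2 : 0 < log 2 := log_pos one_lt_two
  calc 1 - d * s / log 2 = 1 - 2 * (d * s) / (2 * log 2) := by field_simp
    _ ≤ 1 - ((1 + s) * log (1 + d) + (1 - s) * log (1 - d)) / (2 * log 2) := by gcongr
    _ = _ := by
      simp only [logb, log_div (by linarith : 1 + d ≠ 0) two_ne_zero,
        log_div (by linarith : 1 - d ≠ 0) two_ne_zero]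
      field_simp
      ring

section Sums

variable {ι : Type*} [Fintype ι]

lemma sum_binEnt_le {t : ι → ℝ} (ht : ∀ i, |t i| ≤ 1) :
    ∑ i, binEnt ((1 + t i) / 2) ≤ Fintype.card ι - (∑ i, t i ^ 2) / (2 * log 2) := by
  calc ∑ i, binEnt ((1 + t i) / 2) ≤ ∑ i, (1 - t i ^ 2 / (2 * log 2)) :=
        sum_le_sum fun i _ ↦ binEnt_one_add_div_two_le (ht i)
    _ = _ := by simp [sum_sub_distrib, sum_div]

lemma le_sum_crossEntropy {d s : ι → ℝ} (hd : ∀ i, |d i| < 1) (hs : ∀ i, |s i| ≤ 1) :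
    Fintype.card ι - (∑ i, d i * s i) / log 2 ≤
      ∑ i, (-((1 + s i) / 2 * logb 2 ((1 + d i) / 2)) -
        (1 - s i) / 2 * logb 2 ((1 - d i) / 2)) := by
  calc Fintype.card ι - (∑ i, d i * s i) / log 2 = ∑ i, (1 - d i * s i / log 2) := by
        simp [sum_sub_distrib, sum_div]
    _ ≤ _ := sum_le_sum fun i _ ↦ one_sub_mul_div_log_two_le_crossEntropy (hd i) (hs i)

end Sums

theorem entropy_vs_cross_entropy_general
    (n : ℕ) (δ τ : Fin n → ℝ)
    (hδ : ∀ i, δ i ∈ Set.Ico (0 : ℝ) 1) (hτ : ∀ i, τ i ∈ Set.Icc (0 : ℝ) 1)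
    (α β : ℝ) (hα : 0 < α) (hβ0 : 0 ≤ β)
    (hZ : (n : ℝ) - α ≤ ∑ i, binEnt ((1 + τ i) / 2))
    (hcross : ∑ i, (-(((1 + τ i) / 2) * Real.logb 2 ((1 + δ i) / 2)) -
        ((1 - τ i) / 2) * Real.logb 2 ((1 - δ i) / 2)) ≤ (n : ℝ) - β) :
    ∑ i, binEnt ((1 + δ i) / 2) ≤ (n : ℝ) - β ^ 2 / (16 * α) := by
  have hδ' : ∀ i, |δ i| < 1 := fun i ↦ abs_lt.2 ⟨by linarith [(hδ i).1], (hδ i).2⟩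
  have hτ' : ∀ i, |τ i| ≤ 1 := fun i ↦ abs_le.2 ⟨by linarith [(hτ i).1], (hτ i).2⟩
  have hlog2 : 0 < log 2 := log_pos one_lt_two
  have hHX := sum_binEnt_le fun i ↦ (hδ' i).le
  have hHZ := sum_binEnt_le hτ'
  have hCE := le_sum_crossEntropy hδ' hτ'
  simp only [Fintype.card_fin] at hHX hHZ hCE
  have hτsq : ∑ i, τ i ^ 2 ≤ α * (2 * log 2) := by
    rw [← div_le_iff₀ (by positivity)]
    linarith [hZ.trans hHZ]
  have hP : β * log 2 ≤ ∑ i, δ i * τ i := by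
    rw [← le_div_iff₀ hlog2]
    linarith [hCE.trans hcross]
  have hCS : (β * log 2) ^ 2 ≤ (∑ i, δ i ^ 2) * (α * (2 * log 2)) := calc
    (β * log 2) ^ 2 ≤ (∑ i, δ i * τ i) ^ 2 := pow_le_pow_left₀ (by positivity) hP 2
    _ ≤ (∑ i, δ i ^ 2) * ∑ i, τ i ^ 2 := sum_mul_sq_le_sq_mul_sq _ _ _
    _ ≤ (∑ i, δ i ^ 2) * (α * (2 * log 2)) := by gcongr
  have hδsq : β ^ 2 / (16 * α) ≤ (∑ i, δ i ^ 2) / (2 * log 2) := by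
    rw [div_le_div_iff₀ (by positivity) (by positivity)]
    have : 0 ≤ ∑ i, δ i ^ 2 := sum_nonneg fun i _ ↦ sq_nonneg (δ i)
    nlinarith
  linarith

/-- **Entropy versus cross-entropy for biased Bernoulli vectors**: if the vector `Z` of
independent `Ber((1+τᵢ)/2)` variables has entropy at least `n − α` and its cross-entropy
relative to the vector `X` of independent `Ber((1+δᵢ)/2)` variables is at most `n − β`
with `0 ≤ β ≤ α`, then `H(X) ≤ n − β²/(16α)`. -/
theorem entropy_vs_cross_entropy
    (n : ℕ) (hn : 1 ≤ n) (δ τ : Fin n → ℝ)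
    (hδ : ∀ i, δ i ∈ Set.Ico (0 : ℝ) 1) (hτ : ∀ i, τ i ∈ Set.Icc (0 : ℝ) 1)
    (α β : ℝ) (hα : 0 < α) (hβ0 : 0 ≤ β) (hβα : β ≤ α)
    (hZ : (n : ℝ) - α ≤ ∑ i, binEnt ((1 + τ i) / 2))
    (hcross : ∑ i, (-(((1 + τ i) / 2) * Real.logb 2 ((1 + δ i) / 2)) -
        ((1 - τ i) / 2) * Real.logb 2 ((1 - δ i) / 2)) ≤ (n : ℝ) - β) :
    ∑ i, binEnt ((1 + δ i) / 2) ≤ (n : ℝ) - β ^ 2 / (16 * α) :=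
  entropy_vs_cross_entropy_general n δ τ hδ hτ α β hα hβ0 hZ hcross
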